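/- arXiv:1211.5745 — 2 statements merged into one kernel-verified Lean document; each statement's English description precedes it below -/
import Mathlib

section
/- (Third recurrence) For all natural numbers m ≥ 1 and n ≥ 1 and all real x, H_{m,n}(x) + m·H_{m−1,n−1}(x) − x·H_{m,n−1}(x) = 0. -/
open Polynomial Finset

/-- The operator `A p = 2·X·p − p′`. -/
noncomputable def A (p : ℝ[X]) : ℝ[X] := 2 * X * p - derivative p

/-- The two-index Hermite polynomial `H_{m,n} = A^m (X^n)`. -/
noncomputable def H (m n : ℕ) : ℝ[X] := A^[m] (X ^ n)

lemma A_X_mul (q : ℝ[X]) : A (X * q) = X * A q - q := by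
  simp only [A, derivative_mul, derivative_X]
  ring

lemma A_sub_nat_mul (a b : ℝ[X]) (c : ℕ) :
    A (a - (c : ℝ[X]) * b) = A a - (c : ℝ[X]) * A b := by
  simp only [A, derivative_sub, derivative_mul, derivative_natCast]
  ring

lemma key (m : ℕ) (p : ℝ[X]) :
    A^[m+1] (X * p) = X * A^[m+1] p - ((m : ℝ[X]) + 1) * A^[m] p := by
  induction m with
  | zero => simpa using A_X_mul p
  | succ k ih =>
      rw [Function.iterate_succ_apply' A (k+1), ih]
      have : ((k : ℝ[X]) + 1) = ((k + 1 : ℕ) : ℝ[X]) := by push_cast; ring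
      rw [this, A_sub_nat_mul, A_X_mul, Function.iterate_succ_apply' A (k+1) p,
        ← Function.iterate_succ_apply' A k p]
      push_cast
      ring

theorem hmn_rec_three (m n : ℕ) (hm : 1 ≤ m) (hn : 1 ≤ n) (x : ℝ) :
    (H m n).eval x + (m : ℝ) * (H (m - 1) (n - 1)).eval x
      - x * (H m (n - 1)).eval x = 0 := by
  obtain ⟨m', rfl⟩ := Nat.exists_eq_add_of_le hm
  obtain ⟨n', rfl⟩ := Nat.exists_eq_add_of_le hn
  simp only [H, Nat.add_sub_cancel_left, Nat.add_comm 1]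
  have : (X : ℝ[X]) ^ (n' + 1) = X * X ^ n' := by ring
  rw [this, key]
  simp
end

section
/- For all natural numbers m and n and all real t, H_{m,n}(t) = m!·n!·(1/√2)^{m+n} · Σ_{j=0}^{n} Σ_{k=j}^{m} ((−1)^j / (j!·(k−j)!)) · H_{k−j}(0) · (H_{m−k,n−j}(√2·t) / ((m−k)!·(n−j)!)), where H_r = H_{r,0} denotes the physicists' Hermite polynomial. -/
open Polynomial Finset

/-!
The generating function `G_x(s, u) = ∑ H_{m,n}(x) sᵐ uⁿ / (m! n!)` equals
`exp (2xs - s² + u(x - s))`; formally, it is the unique power series in `s` (over `ℝ⟦u⟧`) with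
`∂ₛ G = (2x - u - 2s) G` and `G(0, u) = e^{xu}`, the ODE being the recurrence
`H_{m+1,n} = 2X H_{m,n} - n H_{m,n-1} - 2m H_{m-1,n}`. For `c = 1/√2` the product
`e^{-su/2} · e^{-s²/2} · G_{√2 x}(cs, cu)` satisfies the same ODE and initial condition, so it is
`G_x`. Since `e^{-s²/2} = ∑ cʳ H_r(0) sʳ / r!`, comparing coefficients of `sᵐ uⁿ` gives the
formula, the three factors contributing the indices `j`, `k - j` and `(m - k, n - j)`.
-/

open scoped Nat PowerSeries

lemma A_add (p q : ℝ[X]) : A (p + q) = A p + A q := by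
  simp only [A, derivative_add]; ring

lemma A_C_mul (a : ℝ) (p : ℝ[X]) : A (C a * p) = C a * A p := by
  simp only [A, derivative_C_mul]; ring

lemma A_iterate_C_mul (m : ℕ) (a : ℝ) (p : ℝ[X]) : A^[m] (C a * p) = C a * A^[m] p :=
  Function.Commute.iterate_left (g := (C a * ·)) (A_C_mul a) m p

lemma derivative_A (p : ℝ[X]) : derivative (A p) = A (derivative p) + C 2 * p := by
  simp only [A, derivative_sub, derivative_mul, derivative_X, derivative_ofNat, map_ofNat]
  ring

lemma derivative_A_iterate_succ (m : ℕ) (p : ℝ[X]) :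
    derivative (A^[m + 1] p) = A^[m + 1] (derivative p) + C (2 * (m + 1 : ℝ)) * A^[m] p := by
  induction m with
  | zero => simp [derivative_A]
  | succ m ih =>
    rw [Function.iterate_succ_apply' _ (m + 1), derivative_A, ih, A_add, A_C_mul,
      ← Function.iterate_succ_apply' A, ← Function.iterate_succ_apply' A]
    push_cast
    simp only [map_add, map_mul, map_ofNat, map_natCast, map_one]
    ring

lemma derivative_H (m n : ℕ) :
    derivative (H m n) = C (n : ℝ) * H m (n - 1) + C (2 * m : ℝ) * H (m - 1) n := by
  cases m with
  | zero => simp [H, derivative_X_pow]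
  | succ m => rw [H, derivative_A_iterate_succ, derivative_X_pow, A_iterate_C_mul]; push_cast; rfl

lemma eval_H_succ (m n : ℕ) (x : ℝ) :
    (H (m + 1) n).eval x = 2 * x * (H m n).eval x - n * (H m (n - 1)).eval x
      - 2 * m * (H (m - 1) n).eval x := by
  rw [H, Function.iterate_succ_apply', ← H, A, derivative_H]
  simp only [eval_sub, eval_add, eval_mul, eval_ofNat, eval_X, eval_C]
  ring

namespace PowerSeries
variable {R : Type*} [CommSemiring R]

theorem derivative_mul_of_eq_mul {f g p q : R⟦X⟧} (hf : d⁄dX R f = p * f)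
    (hg : d⁄dX R g = q * g) : d⁄dX R (f * g) = (p + q) * (f * g) := by
  rw [Derivation.leibniz, hf, hg, smul_eq_mul, smul_eq_mul]; ring

theorem eq_zero_of_derivative_eq_mul [Algebra ℚ R] {f q : R⟦X⟧} (hf : d⁄dX R f = q * f)
    (h0 : constantCoeff f = 0) : f = 0 := by
  ext m
  induction m using Nat.strong_induction_on with
  | _ m ih =>
    cases m with
    | zero => simpa using h0
    | succ m =>
      have hu : IsUnit ((m : R) + 1) := by
        simpa using (IsUnit.mk0 ((m : ℚ) + 1) (by positivity)).map (algebraMap ℚ R)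
      rw [map_zero, ← hu.mul_left_eq_zero, ← coeff_derivative, hf, coeff_mul]
      refine sum_eq_zero fun p hp => ?_
      rw [ih p.2 (by have := mem_antidiagonal.mp hp; omega), map_zero, mul_zero]

theorem coeff_C_mul_X_pow_mul_C_mul (a b : R) (j n : ℕ) (g : R⟦X⟧) :
    coeff n (C a * X ^ j * C b * g) = if j ≤ n then a * b * coeff (n - j) g else 0 := by
  rw [mul_comm (C a), mul_assoc, mul_assoc, coeff_X_pow_mul', ← mul_assoc, ← map_mul, coeff_C_mul]

end PowerSeries

/-- In `ℝ⟦X⟧⟦X⟧` the outer variable is `s` and the inner one `u`; this is `G_x(cs, cu)`. -/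
noncomputable def hermiteGF (x c : ℝ) : ℝ⟦X⟧⟦X⟧ :=
  PowerSeries.mk fun m => PowerSeries.mk fun n => c ^ (m + n) * (H m n).eval x / (m ! * n !)

lemma derivative_hermiteGF (x c : ℝ) :
    d⁄dX _ (hermiteGF x c) =
      (PowerSeries.C (PowerSeries.C (2 * c * x) - PowerSeries.C (c ^ 2) * PowerSeries.X) -
        PowerSeries.C (PowerSeries.C (2 * c ^ 2)) * PowerSeries.X) * hermiteGF x c := by
  ext m n
  have hcast : ((m : ℝ⟦X⟧) + 1) = PowerSeries.C ((m : ℝ) + 1) := by simp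
  simp only [PowerSeries.coeff_derivative, hcast, PowerSeries.coeff_mul_C, sub_mul, map_sub,
    mul_assoc, PowerSeries.coeff_C_mul]
  rcases m with _ | m <;> rcases n with _ | n <;>
    simp only [hermiteGF, PowerSeries.coeff_mk, PowerSeries.coeff_succ_X_mul,
      PowerSeries.coeff_zero_X_mul, map_zero, eval_H_succ, Nat.factorial_succ] <;>
    push_cast <;> field_simp <;> ring

noncomputable def expNegMulXY (a : ℝ) : ℝ⟦X⟧⟦X⟧ :=
  PowerSeries.mk fun j => PowerSeries.C ((-a) ^ j / j !) * PowerSeries.X ^ j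

noncomputable def hermiteAtZeroGF (c : ℝ) : ℝ⟦X⟧⟦X⟧ :=
  PowerSeries.mk fun r => PowerSeries.C (c ^ r * (H r 0).eval 0 / r !)

lemma derivative_expNegMulXY (a : ℝ) :
    d⁄dX _ (expNegMulXY a) =
      -PowerSeries.C (PowerSeries.C a * PowerSeries.X) * expNegMulXY a := by
  ext m : 1
  have hcast : ((m : ℝ⟦X⟧) + 1) = PowerSeries.C ((m : ℝ) + 1) := by simp
  have hcoeff : (-a) ^ (m + 1) / (m + 1)! * (m + 1) = -a * ((-a) ^ m / m !) := by
    rw [Nat.factorial_succ]; push_cast; field_simp; ring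
  rw [PowerSeries.coeff_derivative, neg_mul, map_neg, PowerSeries.coeff_C_mul, expNegMulXY,
    PowerSeries.coeff_mk, PowerSeries.coeff_mk, hcast, mul_right_comm, ← map_mul, hcoeff, pow_succ]
  simp only [map_mul, map_neg]
  ring

lemma derivative_hermiteAtZeroGF (c : ℝ) :
    d⁄dX _ (hermiteAtZeroGF c) =
      -PowerSeries.C (PowerSeries.C (2 * c ^ 2)) * PowerSeries.X * hermiteAtZeroGF c := by
  ext r : 1
  have hcast : ((r : ℝ⟦X⟧) + 1) = PowerSeries.C ((r : ℝ) + 1) := by simp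
  rw [PowerSeries.coeff_derivative, hcast, neg_mul, neg_mul, map_neg, mul_assoc,
    PowerSeries.coeff_C_mul]
  rcases r with _ | r
  · simp [hermiteAtZeroGF, eval_H_succ]
  · rw [PowerSeries.coeff_succ_X_mul]
    simp only [hermiteAtZeroGF, PowerSeries.coeff_mk, ← map_mul, ← map_neg, eval_H_succ,
      Nat.factorial_succ]
    congr 1
    push_cast
    field_simp
    ring

lemma constantCoeff_hermiteGF (x c : ℝ) :
    PowerSeries.constantCoeff (hermiteGF x c) = PowerSeries.mk fun n => (c * x) ^ n / n ! := by
  ext n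
  simp [hermiteGF, H, ← PowerSeries.coeff_zero_eq_constantCoeff_apply, mul_pow]

theorem hermiteGF_one_eq_mul {c x y : ℝ} (hc : 2 * c ^ 2 = 1) (hy : c * y = x) :
    hermiteGF x 1 = expNegMulXY (c ^ 2) * hermiteAtZeroGF c * hermiteGF y c := by
  set q : ℝ⟦X⟧⟦X⟧ :=
    PowerSeries.C (PowerSeries.C (2 * x) - PowerSeries.X) - 2 * PowerSeries.X
  have hlhs : d⁄dX _ (hermiteGF x 1) = q * hermiteGF x 1 := by
    rw [derivative_hermiteGF]
    simp only [q, one_pow, mul_one, map_one, one_mul, map_ofNat]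
  have hrhs : d⁄dX _ (expNegMulXY (c ^ 2) * hermiteAtZeroGF c * hermiteGF y c) =
      q * (expNegMulXY (c ^ 2) * hermiteAtZeroGF c * hermiteGF y c) := by
    rw [PowerSeries.derivative_mul_of_eq_mul
      (PowerSeries.derivative_mul_of_eq_mul (derivative_expNegMulXY _)
        (derivative_hermiteAtZeroGF c)) (derivative_hermiteGF y c), hc, mul_assoc 2 c y, hy]
    congr 1
    have hc' : 2 * PowerSeries.C (PowerSeries.C (c ^ 2)) = (1 : ℝ⟦X⟧⟦X⟧) := by
      simpa only [RingHom.comp_apply, map_mul, map_ofNat, map_one] using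
        congrArg (PowerSeries.C.comp PowerSeries.C) hc
    simp only [q, map_sub, map_mul, map_one, map_ofNat]
    linear_combination (-PowerSeries.C PowerSeries.X : ℝ⟦X⟧⟦X⟧) * hc'
  rw [← sub_eq_zero]
  refine PowerSeries.eq_zero_of_derivative_eq_mul (q := q)
    (by rw [map_sub, hlhs, hrhs, mul_sub]) ?_
  rw [map_sub, map_mul, map_mul, constantCoeff_hermiteGF, constantCoeff_hermiteGF, hy,
    sub_eq_zero]
  simp [expNegMulXY, hermiteAtZeroGF, H, ← PowerSeries.coeff_zero_eq_constantCoeff_apply]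

lemma coeff_coeff_hermiteGF (x c : ℝ) (m n : ℕ) :
    PowerSeries.coeff n (PowerSeries.coeff m (hermiteGF x c)) =
      c ^ (m + n) * (H m n).eval x / (m ! * n !) := by
  simp only [hermiteGF, PowerSeries.coeff_mk]

lemma sum_range_sum_range_ite_le {M : Type*} [AddCommMonoid M] (m n : ℕ) (f : ℕ → ℕ → M) :
    ∑ k ∈ range (m + 1), ∑ j ∈ range (k + 1), (if j ≤ n then f j k else 0) =
      ∑ j ∈ range (n + 1), ∑ k ∈ Icc j m, f j k := by
  simp_rw [← sum_filter]
  exact sum_comm' fun k j => by simp only [mem_range, mem_filter, mem_Icc]; omega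

lemma coeff_coeff_expNegMulXY_mul (c y : ℝ) (m n : ℕ) :
    PowerSeries.coeff n
        (PowerSeries.coeff m (expNegMulXY (c ^ 2) * hermiteAtZeroGF c * hermiteGF y c)) =
      c ^ (m + n) * ∑ j ∈ range (n + 1), ∑ k ∈ Icc j m,
        ((-1) ^ j / (j ! * (k - j)!)) * (H (k - j) 0).eval 0 *
          ((H (m - k) (n - j)).eval y / ((m - k)! * (n - j)!)) := by
  rw [PowerSeries.coeff_mul, Nat.sum_antidiagonal_eq_sum_range_succ_mk]
  simp_rw [PowerSeries.coeff_mul _ (expNegMulXY _), Nat.sum_antidiagonal_eq_sum_range_succ_mk,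
    sum_mul, map_sum, expNegMulXY, hermiteAtZeroGF, PowerSeries.coeff_mk,
    PowerSeries.coeff_C_mul_X_pow_mul_C_mul]
  rw [sum_range_sum_range_ite_le, mul_sum]
  refine sum_congr rfl fun j hj => ?_
  rw [mul_sum]
  refine sum_congr rfl fun k hk => ?_
  have hjn := mem_range.mp hj
  obtain ⟨hjk, hkm⟩ := mem_Icc.mp hk
  rw [coeff_coeff_hermiteGF, show m + n = j + j + (k - j) + (m - k + (n - j)) by omega, neg_pow]
  ring

theorem hmn_expansion_at_zero (m n : ℕ) (t : ℝ) :
    (H m n).eval t =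
      (m.factorial : ℝ) * (n.factorial : ℝ) * (1 / Real.sqrt 2) ^ (m + n) *
        ∑ j ∈ range (n + 1), ∑ k ∈ Finset.Icc j m,
          ((-1 : ℝ) ^ j / ((j.factorial : ℝ) * ((k - j).factorial : ℝ))) *
            (H (k - j) 0).eval 0 *
            ((H (m - k) (n - j)).eval (Real.sqrt 2 * t) /
              (((m - k).factorial : ℝ) * ((n - j).factorial : ℝ))) := by
  have hc : 2 * (1 / Real.sqrt 2) ^ 2 = 1 := by
    rw [div_pow, Real.sq_sqrt zero_le_two]; norm_num
  have hy : 1 / Real.sqrt 2 * (Real.sqrt 2 * t) = t := by field_simp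
  have hcoeff := congrArg (fun G => PowerSeries.coeff n (PowerSeries.coeff m G))
    (hermiteGF_one_eq_mul hc hy)
  simp only [coeff_coeff_hermiteGF, coeff_coeff_expNegMulXY_mul, one_pow, one_mul] at hcoeff
  rw [mul_assoc, ← hcoeff]
  field_simp
end
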